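/- arXiv:1904.09231 — 2 statements merged into one kernel-verified Lean document; each statement's English description precedes it below -/
import Mathlib

section
/- Let G be a strict, transitively closed episode and let e be a proper skeleton edge of G. Let H = G − e (which is strict and transitively closed). Then there exists no strict, transitively closed episode H_1 with H ≺ H_1 ≺ G. -/
open scoped Classical

/-- An episode: a finite directed acyclic graph with nodes drawn from `ℕ`,
labelled by symbols of an alphabet `α`. -/
structure Episode (α : Type*) where
  nodes : Finset ℕ
  edge : ℕ → ℕ → Prop
  lab : ℕ → α
  edge_mem : ∀ ⦃x y : ℕ⦄, edge x y → x ∈ nodes ∧ y ∈ nodes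

namespace Episode

variable {α : Type*}

/-- Transitively closed: whenever there is a directed path from `u` to `v`,
`(u,v)` is an edge. -/
def TransClosed (G : Episode α) : Prop :=
  ∀ ⦃u v : ℕ⦄, Relation.TransGen G.edge u v → G.edge u v

/-- Acyclic: no directed cycles. -/
def Acyclic (G : Episode α) : Prop := ∀ v : ℕ, ¬ Relation.TransGen G.edge v v

/-- Strict: any two distinct nodes sharing the same label are joined by a
directed path. -/
def Strict (G : Episode α) : Prop :=
  ∀ u ∈ G.nodes, ∀ v ∈ G.nodes, u ≠ v → G.lab u = G.lab v →
    Relation.TransGen G.edge u v ∨ Relation.TransGen G.edge v u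

/-- The class `𝒮` of strict, transitively closed (acyclic) episodes. -/
def inS (G : Episode α) : Prop := G.Acyclic ∧ G.TransClosed ∧ G.Strict

/-- A sequence `s` covers an episode `G`: there is an injective map from the
nodes of `G` to indices of `s` matching labels and respecting edges. -/
def Covers (s : List α) (G : Episode α) : Prop :=
  ∃ f : {v // v ∈ G.nodes} → Fin s.length,
    Function.Injective f ∧ (∀ v, s.get (f v) = G.lab v.1) ∧
      ∀ u v, G.edge u.1 v.1 → f u < f v

/-- `f` witnesses that `s` is an instance of `G`: a bijective valid mapping. -/
def IsInstanceMap (s : List α) (G : Episode α)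
    (f : {v // v ∈ G.nodes} → Fin s.length) : Prop :=
  Function.Bijective f ∧ (∀ v, s.get (f v) = G.lab v.1) ∧
    ∀ u v, G.edge u.1 v.1 → f u < f v

/-- The subgraph of `H` induced on a set `U` of nodes. -/
def restrict (H : Episode α) (U : Finset ℕ) : Episode α where
  nodes := U
  edge := fun x y => x ∈ U ∧ y ∈ U ∧ H.edge x y
  lab := H.lab
  edge_mem := by rintro x y ⟨h1, h2, -⟩; exact ⟨h1, h2⟩

/-- `G ⪯ H`: `G` is a subepisode of `H`.  There is a subgraph of `H` with as
many nodes as `G` such that every sequence covering that subgraph covers `G`. -/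
def Subep (G H : Episode α) : Prop :=
  ∃ U : Finset ℕ, U ⊆ H.nodes ∧ U.card = G.nodes.card ∧
    ∀ s : List α, Covers s (H.restrict U) → Covers s G

/-- `G ≺ H`: proper subepisode. -/
def ProperSubep (G H : Episode α) : Prop := Subep G H ∧ ¬ Subep H G

/-- `G ∼ H`: every sequence covers `G` iff it covers `H`. -/
def Equivalent (G H : Episode α) : Prop := ∀ s : List α, Covers s G ↔ Covers s H

/-- The nodes of `G` are `0, …, card − 1` listed in the canonical order:
labels increase, and nodes with equal labels are ordered by the edges. -/
def CanonicallyIndexed [LinearOrder α] (G : Episode α) : Prop :=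
  G.nodes = Finset.range G.nodes.card ∧
    ∀ u ∈ G.nodes, ∀ v ∈ G.nodes, u < v →
      G.lab u < G.lab v ∨ (G.lab u = G.lab v ∧ G.edge u v)

/-- An occurrence (instance) of `G` inside `s` whose span is smaller than the
window size `ρ`: an injective valid mapping with `max f − min f < ρ`. -/
def IsOcc (s : List α) (ρ : ℕ) (G : Episode α)
    (f : {v // v ∈ G.nodes} → Fin s.length) : Prop :=
  Function.Injective f ∧ (∀ v, s.get (f v) = G.lab v.1) ∧
    (∀ u v, G.edge u.1 v.1 → f u < f v) ∧
    ∀ u v, (f u : ℕ) < (f v : ℕ) + ρ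

/-- `G` occurs in `s` within some window of length at most `ρ`. -/
def Occurs (s : List α) (ρ : ℕ) (G : Episode α) : Prop := ∃ f, IsOcc s ρ G f

/-- The symbol `x` occurs in `s` inside the interval `[min f, max f]` of an
occurrence `f`. -/
def SymInWindow (s : List α) {G : Episode α}
    (f : {v // v ∈ G.nodes} → Fin s.length) (x : α) : Prop :=
  ∃ i : Fin s.length, s.get i = x ∧ (∃ u, f u ≤ i) ∧ ∃ v, i ≤ f v

/-- The node closure `cl_N`: augment `G` with one new isolated node labelled
`x` for each symbol `x` of `s`, not labelling a node of `G`, that occurs inside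
the interval of every occurrence of `G` (with span `< ρ`). -/
noncomputable def clN [LinearOrder α] (s : List α) (ρ : ℕ) (G : Episode α) :
    Episode α :=
  let newLabs : List α := (s.toFinset.filter
      (fun x => (∀ f, IsOcc s ρ G f → SymInWindow s f x) ∧
        ∀ v ∈ G.nodes, G.lab v ≠ x)).sort (· ≤ ·)
  let base : ℕ := G.nodes.sup id + 1
  { nodes := G.nodes ∪ (Finset.range newLabs.length).image (fun i => base + i)
    edge := G.edge
    lab := fun v =>
      if h : base ≤ v ∧ v - base < newLabs.length ∧ v ∉ G.nodes then
        newLabs.get ⟨v - base, h.2.1⟩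
      else G.lab v
    edge_mem := by
      intro x y h
      exact ⟨Finset.mem_union_left _ (G.edge_mem h).1,
        Finset.mem_union_left _ (G.edge_mem h).2⟩ }

/-- The edge closure `cl_E`: the maximal episode covered by all instances of
`G` in `s` with span `< ρ`; it has an edge `(x,y)` whenever the (unique) valid
mapping of every such instance places `x` before `y`. -/
def clE (s : List α) (ρ : ℕ) (G : Episode α) : Episode α where
  nodes := G.nodes
  edge := fun x y => ∃ (hx : x ∈ G.nodes) (hy : y ∈ G.nodes),
    ∀ f, IsOcc s ρ G f → f ⟨x, hx⟩ < f ⟨y, hy⟩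
  lab := G.lab
  edge_mem := by rintro x y ⟨hx, hy, -⟩; exact ⟨hx, hy⟩

/-- The `i`-closure `icl(G) = cl_E(cl_N(G))`. -/
noncomputable def icl [LinearOrder α] (s : List α) (ρ : ℕ) (G : Episode α) :
    Episode α :=
  clE s ρ (clN s ρ G)

/-- The window `s[a, b]` (0-based, inclusive endpoints). -/
def window (s : List α) (a b : ℕ) : List α := (s.take (b + 1)).drop a

/-- `s[a,b]` is a minimal window of `G` in `s`: it covers `G` and no proper
subwindow of it covers `G`. -/
def IsMinimalWindow (s : List α) (G : Episode α) (a b : ℕ) : Prop :=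
  a ≤ b ∧ b < s.length ∧ Covers (window s a b) G ∧
    ∀ a' b', a ≤ a' → b' ≤ b → a' ≤ b' → (a', b') ≠ (a, b) →
      ¬ Covers (window s a' b') G

/-- Fixed-window frequency: the number of windows of length `ρ` (indexed by
their right endpoints, windows may stick out of the sequence) covering `G`. -/
noncomputable def freqF (s : List α) (ρ : ℕ) (G : Episode α) : ℕ :=
  ((Finset.range (s.length + ρ - 1)).filter
    (fun b => Covers (window s (b + 1 - ρ) b) G)).card

/-- Disjoint-window frequency: the maximal number of pairwise disjoint
intervals of length at most `ρ` whose windows cover `G`. -/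
noncomputable def freqD (s : List α) (ρ : ℕ) (G : Episode α) : ℕ :=
  sSup {n : ℕ | ∃ I : Fin n → ℕ × ℕ,
    (∀ i, (I i).1 ≤ (I i).2 ∧ (I i).2 < (I i).1 + ρ ∧ (I i).2 < s.length ∧
      Covers (window s (I i).1 (I i).2) G) ∧
    ∀ i j, i ≠ j → (I i).2 < (I j).1 ∨ (I j).2 < (I i).1}

/-- `G` is f-closed w.r.t. the fixed-window frequency. -/
noncomputable def FClosedF (s : List α) (ρ : ℕ) (G : Episode α) : Prop :=
  ¬ ∃ H : Episode α, inS H ∧ ProperSubep G H ∧ freqF s ρ H = freqF s ρ G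

/-- `G` is f-closed w.r.t. the disjoint-window frequency. -/
noncomputable def FClosedD (s : List α) (ρ : ℕ) (G : Episode α) : Prop :=
  ¬ ∃ H : Episode α, inS H ∧ ProperSubep G H ∧ freqD s ρ H = freqD s ρ G

/-- `G − e`: remove an edge. -/
def eraseEdge (G : Episode α) (e : ℕ × ℕ) : Episode α where
  nodes := G.nodes
  edge := fun x y => G.edge x y ∧ (x, y) ≠ e
  lab := G.lab
  edge_mem := by rintro x y ⟨h, -⟩; exact G.edge_mem h

/-- `G − v`: remove a node together with all incident edges. -/
def eraseNode (G : Episode α) (w : ℕ) : Episode α where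
  nodes := G.nodes.erase w
  edge := fun x y => G.edge x y ∧ x ≠ w ∧ y ≠ w
  lab := G.lab
  edge_mem := by
    rintro x y ⟨h, hx, hy⟩
    exact ⟨Finset.mem_erase.mpr ⟨hx, (G.edge_mem h).1⟩,
      Finset.mem_erase.mpr ⟨hy, (G.edge_mem h).2⟩⟩

/-- `G + e`: add an edge. -/
def addEdge (G : Episode α) (e : ℕ × ℕ) : Episode α where
  nodes := G.nodes ∪ {e.1, e.2}
  edge := fun x y => G.edge x y ∨ (x, y) = e
  lab := G.lab
  edge_mem := by
    rintro x y (h | h)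
    · exact ⟨Finset.mem_union_left _ (G.edge_mem h).1,
        Finset.mem_union_left _ (G.edge_mem h).2⟩
    · cases h
      exact ⟨Finset.mem_union_right _ (by simp), Finset.mem_union_right _ (by simp)⟩

/-- A skeleton edge: an edge `(v,w)` such that there is no two-step path
`v → u → w`. -/
def IsSkeletonEdge (G : Episode α) (e : ℕ × ℕ) : Prop :=
  G.edge e.1 e.2 ∧ ¬ ∃ u, G.edge e.1 u ∧ G.edge u e.2

/-- A proper skeleton edge: a skeleton edge whose endpoints carry different
labels. -/
def IsProperSkeletonEdge (G : Episode α) (e : ℕ × ℕ) : Prop :=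
  IsSkeletonEdge G e ∧ G.lab e.1 ≠ G.lab e.2

/-- The set of edges of `G`, as a set of pairs. -/
def edgeSet (G : Episode α) : Set (ℕ × ℕ) := {p | G.edge p.1 p.2}

/-- Lexicographic order on edges (using the canonical order of the nodes). -/
def edgeLT (e f : ℕ × ℕ) : Prop := e.1 < f.1 ∨ (e.1 = f.1 ∧ e.2 < f.2)

/-- `e` is the last (lexicographically largest) proper skeleton edge of `G`. -/
def IsLastEdge (G : Episode α) (e : ℕ × ℕ) : Prop :=
  IsProperSkeletonEdge G e ∧
    ∀ f, IsProperSkeletonEdge G f → f = e ∨ edgeLT f e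

/-- A solitary node: a node with no incident edges. -/
def Solitary (G : Episode α) (v : ℕ) : Prop :=
  v ∈ G.nodes ∧ ∀ u, ¬ G.edge u v ∧ ¬ G.edge v u

/-- A source node: a node with no incoming edges. -/
def IsSource (G : Episode α) (v : ℕ) : Prop := v ∈ G.nodes ∧ ∀ u, ¬ G.edge u v

/-- A proper skeleton edge `e` of `G` is derivable if `G ⪯ icl(G − e)`. -/
noncomputable def DerivableEdge [LinearOrder α] (s : List α) (ρ : ℕ)
    (G : Episode α) (e : ℕ × ℕ) : Prop :=
  IsProperSkeletonEdge G e ∧ Subep G (icl s ρ (G.eraseEdge e))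

/-- A solitary node `v` of `G` is derivable if `G ⪯ icl(G − v)`. -/
noncomputable def DerivableNode [LinearOrder α] (s : List α) (ρ : ℕ)
    (G : Episode α) (v : ℕ) : Prop :=
  Solitary G v ∧ Subep G (icl s ρ (G.eraseNode v))

/-- `GreedyFrom s t G f`: `f` is the greedy mapping of `G` in the suffix of `s`
starting at (0-based) position `t`, recording absolute indices of `s`:
repeatedly map the source node of `G` whose label has the earliest remaining
occurrence to that position, and recurse on the episode with that node
removed and the part of the sequence after that position. -/
inductive GreedyFrom (s : List α) : ℕ → Episode α → (ℕ → ℕ) → Prop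
  | empty (t : ℕ) (G : Episode α) (f : ℕ → ℕ) (hG : G.nodes = ∅) :
      GreedyFrom s t G f
  | step (t : ℕ) (G : Episode α) (f : ℕ → ℕ) (v k : ℕ)
      (hv : G.IsSource v) (ht : t ≤ k) (hk : k < s.length)
      (hlab : s.get ⟨k, hk⟩ = G.lab v)
      (hmin : ∀ j (hj : j < s.length), t ≤ j → j < k →
        ¬ ∃ w, G.IsSource w ∧ s.get ⟨j, hj⟩ = G.lab w)
      (hfv : f v = k)
      (hrec : GreedyFrom s (k + 1) (G.eraseNode v) f) :
      GreedyFrom s t G f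

/-- One step of removing a derivable proper skeleton edge or a derivable
solitary node. -/
noncomputable def RemStep [LinearOrder α] (s : List α) (ρ : ℕ) :
    Episode α → Episode α → Prop := fun G G' =>
  (∃ e, DerivableEdge s ρ G e ∧ G' = G.eraseEdge e) ∨
  (∃ v, DerivableNode s ρ G v ∧ G' = G.eraseNode v)

end Episode

/-!
Between episodes of `𝒮` with equally many nodes, `A ⪯ B` yields a label-preserving bijection
`φ` of the nodes carrying edges of `A` to edges of `B`. Read a linear extension of `B` as a
sequence: it covers `A` too, and since the nodes of a strict episode sharing a label form a chain,
a covering map sends the `k`-th node labelled `a` to the `k`-th occurrence of `a`. So the bijection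
read off one linear extension is compatible with all of them: an edge of `A` is respected by every
linear extension of `B`, hence is an edge of `B`. If `φ` is also onto the edges, coverings transfer
back and `B ⪯ A`. Along `G − e ≺ H₁ ≺ G` the number of edges would therefore increase strictly
twice, whereas `G` has only one edge more than `G − e`.
-/

theorem Relation.TransGen.or_of_adjoin {β : Type*} {r : β → β → Prop} {x y a b : β}
    (h : Relation.TransGen (fun a b => r a b ∨ (a = y ∧ b = x)) a b) :
    Relation.TransGen r a b ∨ Relation.ReflTransGen r a y ∧ Relation.ReflTransGen r x b := by
  induction h with
  | single hab =>
    rcases hab with hab | ⟨rfl, rfl⟩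
    · exact .inl (.single hab)
    · exact .inr ⟨.refl, .refl⟩
  | tail _ hcd ih =>
    rcases hcd with hcd | ⟨rfl, rfl⟩
    · exact ih.imp (·.tail hcd) fun h => ⟨h.1, h.2.tail hcd⟩
    · exact .inr ⟨ih.elim (·.to_reflTransGen) (·.1), .refl⟩

theorem exists_equiv_fin_lt_of_acyclic {β : Type*} [Fintype β]
    (r : β → β → Prop) (hr : ∀ b, ¬ Relation.TransGen r b b) :
    ∃ σ : β ≃ Fin (Fintype.card β), ∀ u v, r u v → σ u < σ v := by
  let _ : PartialOrder β :=
    { le := fun u v => u = v ∨ Relation.TransGen r u v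
      le_refl := fun _ => .inl rfl
      le_trans := by
        rintro u v w (rfl | huv) (rfl | hvw)
        exacts [.inl rfl, .inr hvw, .inr huv, .inr (huv.trans hvw)]
      le_antisymm := by
        rintro u v (rfl | huv) (h | hvu)
        exacts [rfl, rfl, h.symm, (hr _ (huv.trans hvu)).elim] }
  let _ : Fintype (LinearExtension β) := inferInstanceAs (Fintype β)
  let σ := (Fintype.orderIsoFinOfCardEq (LinearExtension β) rfl).symm
  refine ⟨σ.toEquiv, fun u v huv => lt_of_le_of_ne ?_ (σ.injective.ne ?_)⟩
  · exact σ.monotone (toLinearExtension.monotone (Or.inr (.single huv)))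
  · rintro rfl
    exact hr _ (.single huv)

namespace Episode

open Finset Relation

variable {α : Type*} {A B : Episode α} {s : List α} {φ : ℕ → ℕ}

theorem exists_isInstanceMap_of_le (R : ℕ → ℕ → Prop)
    (hR : ∀ v, ¬ TransGen R v v) (hle : ∀ u v, B.edge u v → R u v) :
    ∃ (s : List α) (f : {v // v ∈ B.nodes} → Fin s.length),
      IsInstanceMap s B f ∧ ∀ u v, R u.1 v.1 → f u < f v := by
  obtain ⟨σ, hσ⟩ := exists_equiv_fin_lt_of_acyclic (fun u v : {v // v ∈ B.nodes} => R u v)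
    fun v hv => hR v (hv.lift Subtype.val fun _ _ => id)
  let s := List.ofFn fun i => B.lab (σ.symm i)
  let f : {v // v ∈ B.nodes} → Fin s.length := fun v => Fin.cast List.length_ofFn.symm (σ v)
  refine ⟨s, f, ⟨(finCongr List.length_ofFn.symm).bijective.comp σ.bijective, fun v => ?_,
    fun u v h => hσ u v (hle _ _ h)⟩, fun u v h => hσ u v h⟩
  simp [s, f]

theorem edge_of_forall_isInstanceMap (hac : B.Acyclic) (htc : B.TransClosed)
    {x y : {v // v ∈ B.nodes}} (hxy : x ≠ y)
    (h : ∀ s f, IsInstanceMap s B f → f x < f y) : B.edge x y := by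
  by_contra hne
  -- adjoin the reversed edge `y → x`: a cycle through it would give a path from `x` to `y`
  have hR : ∀ v, ¬ TransGen (fun a b => B.edge a b ∨ (a = y ∧ b = x)) v v := by
    intro v hv
    rcases hv.or_of_adjoin with hv | ⟨hvy, hxv⟩
    · exact hac v hv
    · rcases reflTransGen_iff_eq_or_transGen.mp (hxv.trans hvy) with hyx | hxy'
      · exact hxy (Subtype.ext hyx.symm)
      · exact hne (htc hxy')
  obtain ⟨s, f, hf, hfR⟩ := exists_isInstanceMap_of_le _ hR fun _ _ => .inl
  exact (h s f hf).asymm (hfR y x (.inr ⟨rfl, rfl⟩))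

noncomputable def occurrenceRank (s : List α) (a : α) (i : Fin s.length) : ℕ :=
  #{j | s.get j = a ∧ j < i}

noncomputable def labelRank (A : Episode α) (v : ℕ) : ℕ :=
  #{w ∈ A.nodes | A.lab w = A.lab v ∧ A.edge w v}

theorem occurrenceRank_strictMonoOn (s : List α) (a : α) :
    StrictMonoOn (occurrenceRank s a) {i | s.get i = a} := by
  intro i hi j _ hij
  refine card_lt_card ⟨fun k hk => ?_, fun hsub => ?_⟩
  · simp only [mem_filter, mem_univ, true_and] at hk ⊢
    exact ⟨hk.1, hk.2.trans hij⟩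
  · simpa using hsub (by simpa using ⟨hi, hij⟩ : i ∈ ({k | s.get k = a ∧ k < j} : Finset _))

theorem IsInstanceMap.length_eq {f : {v // v ∈ A.nodes} → Fin s.length}
    (hf : IsInstanceMap s A f) : s.length = #A.nodes := by
  simpa using (Fintype.card_of_bijective hf.1).symm

theorem Covers.exists_isInstanceMap (h : Covers s A) (hlen : s.length = #A.nodes) :
    ∃ f, IsInstanceMap s A f := by
  obtain ⟨f, hinj, hlab, hedge⟩ := h
  exact ⟨f, (Fintype.bijective_iff_injective_and_card f).2 ⟨hinj, by simp [hlen]⟩, hlab, hedge⟩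

theorem IsInstanceMap.occurrenceRank_eq (hA : inS A) {f : {v // v ∈ A.nodes} → Fin s.length}
    (hf : IsInstanceMap s A f) (v : {v // v ∈ A.nodes}) :
    occurrenceRank s (A.lab v) (f v) = labelRank A v := by
  symm
  refine card_bij (fun w hw => f ⟨w, (mem_filter.1 hw).1⟩) (fun w hw => ?_)
    (fun w₁ _ w₂ _ h => congrArg Subtype.val (hf.1.1 h)) (fun i hi => ?_)
  · simp only [mem_filter, mem_univ, true_and] at hw ⊢
    exact ⟨(hf.2.1 _).trans hw.2.1, hf.2.2 _ v hw.2.2⟩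
  · simp only [mem_filter, mem_univ, true_and] at hi
    obtain ⟨w, rfl⟩ := hf.1.2 i
    have hlab : A.lab w = A.lab v := (hf.2.1 w).symm.trans hi.1
    have hwv : w.1 ≠ v.1 := fun h => hi.2.ne (congrArg f (Subtype.ext h))
    refine ⟨w, mem_filter.2 ⟨w.2, hlab, ?_⟩, rfl⟩
    rcases hA.2.2 w w.2 v v.2 hwv hlab with h | h
    · exact hA.2.1 h
    · exact absurd (hf.2.2 v w (hA.2.1 h)) hi.2.asymm

theorem IsInstanceMap.apply_eq_of_labelRank_eq (hA : inS A) (hB : inS B)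
    {f : {v // v ∈ A.nodes} → Fin s.length} {g : {v // v ∈ B.nodes} → Fin s.length}
    (hf : IsInstanceMap s A f) (hg : IsInstanceMap s B g) {u : {v // v ∈ A.nodes}}
    {v : {v // v ∈ B.nodes}} (hlab : A.lab u = B.lab v) (hrank : labelRank A u = labelRank B v) :
    f u = g v :=
  (occurrenceRank_strictMonoOn s (A.lab u)).injOn (hf.2.1 u) ((hg.2.1 v).trans hlab.symm) <| by
    rw [hf.occurrenceRank_eq hA, hlab, hg.occurrenceRank_eq hB, hrank]

structure IsBijHom (φ : ℕ → ℕ) (A B : Episode α) : Prop where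
  bijOn : Set.BijOn φ A.nodes B.nodes
  lab_eq : ∀ v ∈ A.nodes, B.lab (φ v) = A.lab v
  edge : ∀ u v, A.edge u v → B.edge (φ u) (φ v)

theorem exists_bijective_isInstanceMap_comp (hA : inS A) (hB : inS B)
    (hcard : #A.nodes = #B.nodes) (himp : ∀ s, Covers s B → Covers s A) :
    ∃ ψ : {v // v ∈ A.nodes} → {v // v ∈ B.nodes}, Function.Bijective ψ ∧
      (∀ v, B.lab (ψ v) = A.lab v) ∧
      ∀ s f g, IsInstanceMap s A f → IsInstanceMap s B g → ∀ v, f v = g (ψ v) := by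
  obtain ⟨s, c, hc, -⟩ := exists_isInstanceMap_of_le B.edge hB.1 fun _ _ => id
  obtain ⟨f, hf⟩ := (himp s ⟨c, hc.1.1, hc.2⟩).exists_isInstanceMap (hc.length_eq.trans hcard.symm)
  let κ := Equiv.ofBijective c hc.1
  have hcψ : ∀ v, c (κ.symm (f v)) = f v := fun v => κ.apply_symm_apply (f v)
  have hlab : ∀ v, B.lab (κ.symm (f v)) = A.lab v := fun v => by rw [← hc.2.1, hcψ, hf.2.1]
  refine ⟨fun v => κ.symm (f v), κ.symm.bijective.comp hf.1, hlab, fun s' f' g hf' hg v => ?_⟩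
  refine hf'.apply_eq_of_labelRank_eq hA hB hg (hlab v).symm ?_
  rw [← hf.occurrenceRank_eq hA, ← hc.occurrenceRank_eq hB, hcψ, hlab]

theorem exists_isBijHom (hA : inS A) (hB : inS B) (hcard : #A.nodes = #B.nodes)
    (himp : ∀ s, Covers s B → Covers s A) : ∃ φ, IsBijHom φ A B := by
  obtain ⟨ψ, hψ, hlab, hcomp⟩ := exists_bijective_isInstanceMap_comp hA hB hcard himp
  have hedge : ∀ u v, A.edge u.1 v.1 → B.edge (ψ u) (ψ v) := by
    intro u v huv
    refine edge_of_forall_isInstanceMap hB.1 hB.2.1 (fun h => ?_) fun s g hg => ?_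
    · exact hA.1 v (.single (by rwa [hψ.1 h] at huv))
    · obtain ⟨f, hf⟩ := (himp s ⟨g, hg.1.1, hg.2⟩).exists_isInstanceMap
        (hg.length_eq.trans hcard.symm)
      rw [← hcomp s f g hf hg, ← hcomp s f g hf hg]
      exact hf.2.2 u v huv
  let φ : ℕ → ℕ := fun n => if h : n ∈ A.nodes then ψ ⟨n, h⟩ else n
  have hφ : ∀ n (h : n ∈ A.nodes), φ n = ψ ⟨n, h⟩ := fun n h => dif_pos h
  refine ⟨φ, ⟨fun n hn => ?_, fun m hm n hn h => ?_, fun n hn => ?_⟩, fun n hn => ?_,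
    fun u v huv => ?_⟩
  · simp only [hφ n hn, Subtype.coe_prop]
  · simpa using hψ.1 (Subtype.ext ((hφ m hm).symm.trans (h.trans (hφ n hn))))
  · obtain ⟨⟨m, hm⟩, hmn⟩ := hψ.2 ⟨n, hn⟩
    exact ⟨m, hm, (hφ m hm).trans (congrArg Subtype.val hmn)⟩
  · rw [hφ n hn]
    exact hlab ⟨n, hn⟩
  · obtain ⟨hu, hv⟩ := A.edge_mem huv
    rw [hφ u hu, hφ v hv]
    exact hedge ⟨u, hu⟩ ⟨v, hv⟩ huv

noncomputable def edgeFinset (A : Episode α) : Finset (ℕ × ℕ) :=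
  {p ∈ A.nodes ×ˢ A.nodes | A.edge p.1 p.2}

theorem mem_edgeFinset {p : ℕ × ℕ} : p ∈ A.edgeFinset ↔ A.edge p.1 p.2 := by
  simpa [edgeFinset] using fun h => A.edge_mem h

theorem edgeFinset_eraseEdge (G : Episode α) (e : ℕ × ℕ) :
    (G.eraseEdge e).edgeFinset = G.edgeFinset.erase e := by
  ext p
  simp only [mem_erase, mem_edgeFinset, eraseEdge, Prod.mk.eta]
  exact and_comm

theorem IsBijHom.mapsTo_edgeFinset (h : IsBijHom φ A B) :
    Set.MapsTo (Prod.map φ φ) A.edgeFinset B.edgeFinset :=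
  fun _ hp => mem_edgeFinset.2 (h.edge _ _ (mem_edgeFinset.1 hp))

theorem IsBijHom.injOn_edgeFinset (h : IsBijHom φ A B) :
    Set.InjOn (Prod.map φ φ) A.edgeFinset := by
  rintro ⟨u, v⟩ huv ⟨u', v'⟩ huv' hp
  obtain ⟨hu, hv⟩ := A.edge_mem (mem_edgeFinset.1 huv)
  obtain ⟨hu', hv'⟩ := A.edge_mem (mem_edgeFinset.1 huv')
  simp only [Prod.map, Prod.mk.injEq] at hp
  exact Prod.ext (h.bijOn.injOn hu hu' hp.1) (h.bijOn.injOn hv hv' hp.2)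

theorem IsBijHom.card_edgeFinset_le (h : IsBijHom φ A B) : #A.edgeFinset ≤ #B.edgeFinset :=
  card_le_card_of_injOn _ h.mapsTo_edgeFinset h.injOn_edgeFinset

theorem IsBijHom.covers (h : IsBijHom φ A B) (hE : #B.edgeFinset ≤ #A.edgeFinset) {s : List α}
    (hs : Covers s A) : Covers s B := by
  have himage : A.edgeFinset.image (Prod.map φ φ) = B.edgeFinset :=
    eq_of_subset_of_card_le (image_subset_iff.2 h.mapsTo_edgeFinset)
      (by rwa [card_image_of_injOn h.injOn_edgeFinset])
  have hinv : Set.InvOn (Function.invFunOn φ A.nodes) φ A.nodes B.nodes :=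
    h.bijOn.invOn_invFunOn
  obtain ⟨f, hinj, hlab, hedge⟩ := hs
  let g : {w // w ∈ B.nodes} → {v // v ∈ A.nodes} :=
    fun w => ⟨Function.invFunOn φ A.nodes w, h.bijOn.surjOn.mapsTo_invFunOn w.2⟩
  have hφg : ∀ w, φ (g w) = w := fun w => hinv.2 w.2
  refine ⟨f ∘ g, hinj.comp fun w w' hw => Subtype.ext ?_, fun w => ?_, fun w w' hw => ?_⟩
  · rw [← hφg w, ← hφg w', hw]
  · rw [Function.comp_apply, hlab, ← h.lab_eq _ (g w).2, hφg]
  · have hw : ((w : ℕ), (w' : ℕ)) ∈ A.edgeFinset.image (Prod.map φ φ) :=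
      himage ▸ mem_edgeFinset.2 hw
    obtain ⟨⟨u, v⟩, huv, hp⟩ := mem_image.1 hw
    obtain ⟨hu, hv⟩ := A.edge_mem (mem_edgeFinset.1 huv)
    simp only [Prod.map, Prod.mk.injEq] at hp
    have hgw : g w = ⟨u, hu⟩ := Subtype.ext <| by simpa only [g, hp.1] using hinv.1 hu
    have hgw' : g w' = ⟨v, hv⟩ := Subtype.ext <| by simpa only [g, hp.2] using hinv.1 hv
    simpa [hgw, hgw'] using hedge ⟨u, hu⟩ ⟨v, hv⟩ (mem_edgeFinset.1 huv)

theorem Subep.card_le (h : Subep A B) : #A.nodes ≤ #B.nodes := by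
  obtain ⟨U, hU, hcard, -⟩ := h
  exact hcard ▸ card_le_card hU

theorem covers_restrict_nodes {s : List α} : Covers s (B.restrict B.nodes) ↔ Covers s B :=
  ⟨fun ⟨f, hinj, hlab, hedge⟩ => ⟨f, hinj, hlab, fun u v h => hedge u v ⟨u.2, v.2, h⟩⟩,
    fun ⟨f, hinj, hlab, hedge⟩ => ⟨f, hinj, hlab, fun u v h => hedge u v h.2.2⟩⟩

theorem subep_iff_of_card_eq (hcard : #A.nodes = #B.nodes) :
    Subep A B ↔ ∀ s, Covers s B → Covers s A := by
  refine ⟨fun ⟨U, hU, hUcard, himp⟩ s hs => ?_, fun h =>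
    ⟨B.nodes, subset_rfl, hcard.symm, fun s hs => h s (covers_restrict_nodes.1 hs)⟩⟩
  obtain rfl : U = B.nodes := eq_of_subset_of_card_le hU (by rw [hUcard, hcard])
  exact himp s (covers_restrict_nodes.2 hs)

theorem Subep.card_edgeFinset_le (hA : inS A) (hB : inS B) (h : Subep A B)
    (hcard : #A.nodes = #B.nodes) : #A.edgeFinset ≤ #B.edgeFinset := by
  obtain ⟨φ, hφ⟩ := exists_isBijHom hA hB hcard ((subep_iff_of_card_eq hcard).1 h)
  exact hφ.card_edgeFinset_le

theorem Subep.symm_of_card_edgeFinset_le (hA : inS A) (hB : inS B) (h : Subep A B)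
    (hcard : #A.nodes = #B.nodes) (hE : #B.edgeFinset ≤ #A.edgeFinset) : Subep B A := by
  obtain ⟨φ, hφ⟩ := exists_isBijHom hA hB hcard ((subep_iff_of_card_eq hcard).1 h)
  exact (subep_iff_of_card_eq hcard.symm).2 fun s => hφ.covers hE

theorem inS_eraseEdge {G : Episode α} (hG : inS G) {e : ℕ × ℕ}
    (he : IsProperSkeletonEdge G e) : inS (G.eraseEdge e) := by
  obtain ⟨hac, htc, hst⟩ := hG
  have hmono : ∀ {x y}, TransGen (G.eraseEdge e).edge x y → TransGen G.edge x y :=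
    TransGen.mono (fun _ _ h => h.1) _ _
  refine ⟨fun v hv => hac v (hmono hv), fun u v h => ?_, fun u hu v hv huv hlab => ?_⟩
  · rcases h with _ | ⟨hub, hbv⟩
    · assumption
    refine ⟨htc ((hmono hub).tail hbv.1), fun hev => he.1.2 ?_⟩
    obtain rfl := hev
    exact ⟨_, htc (hmono hub), hbv.1⟩
  · have hne : ∀ {x y}, G.lab x = G.lab y → (x, y) ≠ e := fun hxy hxye => he.2 (hxye ▸ hxy)
    rcases hst u hu v hv huv hlab with h | h
    · exact .inl (.single ⟨htc h, hne hlab⟩)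
    · exact .inr (.single ⟨htc h, hne hlab.symm⟩)

end Episode

open Episode in
/-- If `e` is a proper skeleton edge of `G ∈ 𝒮` and `H = G − e` (which lies in
`𝒮`), then there is no episode `H₁ ∈ 𝒮` with `H ≺ H₁ ≺ G`. -/
theorem stmt15 {α : Type*} (G : Episode α) (hG : inS G) (e : ℕ × ℕ)
    (he : IsProperSkeletonEdge G e) :
    inS (G.eraseEdge e) ∧
    ¬ ∃ H₁ : Episode α, inS H₁ ∧
      ProperSubep (G.eraseEdge e) H₁ ∧ ProperSubep H₁ G := by
  have hH := inS_eraseEdge hG he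
  refine ⟨hH, fun ⟨H₁, hH₁, ⟨hHH₁, hH₁H⟩, ⟨hH₁G, hGH₁⟩⟩ => ?_⟩
  have hnodes : (G.eraseEdge e).nodes.card = G.nodes.card := rfl
  have hcard₁ : (G.eraseEdge e).nodes.card = H₁.nodes.card := by
    have := hHH₁.card_le; have := hH₁G.card_le; omega
  have hcard₂ : H₁.nodes.card = G.nodes.card := hcard₁.symm.trans hnodes
  have hE₁ := hHH₁.card_edgeFinset_le hH hH₁ hcard₁
  have hE₂ := hH₁G.card_edgeFinset_le hH₁ hG hcard₂
  have hE : (G.eraseEdge e).edgeFinset.card + 1 = G.edgeFinset.card := by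
    rw [edgeFinset_eraseEdge, Finset.card_erase_add_one (mem_edgeFinset.2 he.1.1)]
  rcases le_or_gt H₁.edgeFinset.card (G.eraseEdge e).edgeFinset.card with h | h
  · exact hH₁H (hHH₁.symm_of_card_edgeFinset_le hH hH₁ hcard₁ h)
  · exact hGH₁ (hH₁G.symm_of_card_edgeFinset_le hH₁ hG hcard₂ (by omega))
end

section
/- Fix a sequence s and a window size ρ. Let G be a strict, transitively closed episode and let e be a non-derivable proper skeleton edge of G. Then e is a non-derivable proper skeleton edge in G − f, for any proper skeleton edge f ≠ e of G, and e is a non-derivable proper skeleton edge in G − v, for any solitary node v of G. -/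
open scoped Classical

/-!
Removing `f`, or a solitary node `v`, turns `G` into a subgraph `H` that still contains `e` and
in which the nodes labelled like an endpoint of `e` still form chains (by strictness and
transitive closure). Derivability of `e` transfers from `H` to `G`: an occurrence `g` of
`cl_N(G − e)` induces one of `cl_N(H − e)`, so the subsequence of `s` at the positions of `g`
covers `icl(H − e)` and hence `H`. On each of the two label chains this covering of `H` and `g`
are monotone maps onto the same positions, so they agree; thus `g` places `e.1` before `e.2`,
i.e. `e` is an edge of `icl(G − e)`.
-/

section

variable {ι β : Type*} [LinearOrder β] {T : Finset ι} {r : ι → ι → Prop}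

theorem Finset.strictMonoOn_card_filter_lt (P : Finset β) :
    StrictMonoOn (fun a => (P.filter (· < a)).card) P := by
  intro a ha b _ hab
  refine Finset.card_lt_card ⟨fun x hx => ?_, fun hsub => ?_⟩
  · simp only [Finset.mem_filter] at hx ⊢
    exact ⟨hx.1, hx.2.trans hab⟩
  · exact lt_irrefl a (Finset.mem_filter.1 (hsub (Finset.mem_filter.2 ⟨ha, hab⟩))).2

theorem Finset.injOn_of_strictMono_rel (htot : ∀ u ∈ T, ∀ w ∈ T, u ≠ w → r u w ∨ r w u)
    {χ : ι → β} (hχ : ∀ u ∈ T, ∀ w ∈ T, r u w → χ u < χ w) : Set.InjOn χ T := by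
  intro u hu w hw h
  by_contra huw
  rcases htot u hu w hw huw with h' | h'
  · exact (hχ u hu w hw h').ne h
  · exact (hχ w hw u hu h').ne h.symm

theorem Finset.card_filter_image_lt (htot : ∀ u ∈ T, ∀ w ∈ T, u ≠ w → r u w ∨ r w u)
    {χ : ι → β} (hχ : ∀ u ∈ T, ∀ w ∈ T, r u w → χ u < χ w) {u : ι} (hu : u ∈ T) :
    ((T.image χ).filter (· < χ u)).card = (T.filter (r · u)).card := by
  have : (T.image χ).filter (· < χ u) = (T.filter (r · u)).image χ := by
    ext p
    simp only [Finset.mem_filter, Finset.mem_image]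
    constructor
    · rintro ⟨⟨w, hw, rfl⟩, hlt⟩
      refine ⟨w, ⟨hw, ?_⟩, rfl⟩
      rcases htot w hw u hu (by rintro rfl; exact hlt.false) with h | h
      · exact h
      · exact absurd (hχ u hu w hw h) hlt.asymm
    · rintro ⟨w, ⟨hw, h⟩, rfl⟩
      exact ⟨⟨w, hw, rfl⟩, hχ w hw u hu h⟩
  rw [this, Finset.card_image_of_injOn
    ((Finset.injOn_of_strictMono_rel htot hχ).mono (Finset.filter_subset _ _))]

theorem Finset.eqOn_of_strictMono_rel_of_image_subset
    (htot : ∀ u ∈ T, ∀ w ∈ T, u ≠ w → r u w ∨ r w u) {φ ψ : ι → β}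
    (hφ : ∀ u ∈ T, ∀ w ∈ T, r u w → φ u < φ w) (hψ : ∀ u ∈ T, ∀ w ∈ T, r u w → ψ u < ψ w)
    (himg : T.image ψ ⊆ T.image φ) : Set.EqOn φ ψ T := by
  have heq : T.image ψ = T.image φ := Finset.eq_of_subset_of_card_le himg <| by
    rw [Finset.card_image_of_injOn (Finset.injOn_of_strictMono_rel htot hφ),
      Finset.card_image_of_injOn (Finset.injOn_of_strictMono_rel htot hψ)]
  intro u hu
  -- both `φ u` and `ψ u` have exactly `#{w ∈ T | r w u}` elements of the common image below them
  refine (Finset.strictMonoOn_card_filter_lt (T.image φ)).injOn (Finset.mem_image_of_mem φ hu)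
    (heq ▸ Finset.mem_image_of_mem ψ hu) ?_
  rw [Finset.card_filter_image_lt htot hφ hu, ← Finset.card_filter_image_lt htot hψ hu, heq]

end

namespace Episode

section

variable {α : Type*}

def IsSubgraph (H G : Episode α) : Prop :=
  H.nodes ⊆ G.nodes ∧ H.lab = G.lab ∧ ∀ ⦃u w : ℕ⦄, H.edge u w → G.edge u w

theorem eraseEdge_isSubgraph (G : Episode α) (f : ℕ × ℕ) : (G.eraseEdge f).IsSubgraph G :=
  ⟨subset_rfl, rfl, fun _ _ h => h.1⟩

theorem eraseNode_isSubgraph (G : Episode α) (v : ℕ) : (G.eraseNode v).IsSubgraph G :=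
  ⟨Finset.erase_subset _ _, rfl, fun _ _ h => h.1⟩

theorem IsSubgraph.eraseEdge {H G : Episode α} (h : H.IsSubgraph G) (e : ℕ × ℕ) :
    (H.eraseEdge e).IsSubgraph (G.eraseEdge e) :=
  ⟨h.1, h.2.1, fun _ _ huw => ⟨h.2.2 huw.1, huw.2⟩⟩

theorem IsProperSkeletonEdge.eraseEdge {G : Episode α} {e f : ℕ × ℕ}
    (he : G.IsProperSkeletonEdge e) (hef : e ≠ f) : (G.eraseEdge f).IsProperSkeletonEdge e :=
  ⟨⟨⟨he.1.1, hef⟩, fun ⟨u, h₁, h₂⟩ => he.1.2 ⟨u, h₁.1, h₂.1⟩⟩, he.2⟩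

theorem IsProperSkeletonEdge.eraseNode {G : Episode α} {e : ℕ × ℕ} {v : ℕ}
    (he : G.IsProperSkeletonEdge e) (h₁ : e.1 ≠ v) (h₂ : e.2 ≠ v) :
    (G.eraseNode v).IsProperSkeletonEdge e :=
  ⟨⟨⟨he.1.1, h₁, h₂⟩, fun ⟨u, hu₁, hu₂⟩ => he.1.2 ⟨u, hu₁.1, hu₂.1⟩⟩, he.2⟩

theorem Solitary.ne_of_edge {G : Episode α} {v u w : ℕ} (hv : G.Solitary v) (h : G.edge u w) :
    u ≠ v ∧ w ≠ v :=
  ⟨by rintro rfl; exact (hv.2 w).2 h, by rintro rfl; exact (hv.2 u).1 h⟩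

theorem edge_or_edge_of_lab_eq {G : Episode α} (hs : G.Strict) (ht : G.TransClosed)
    {u w : ℕ} (hu : u ∈ G.nodes) (hw : w ∈ G.nodes) (huw : u ≠ w) (hl : G.lab u = G.lab w) :
    G.edge u w ∨ G.edge w u :=
  (hs u hu w hw huw hl).imp (fun h => ht h) (fun h => ht h)

def LabelChain (G H : Episode α) (x : α) : Prop :=
  ∀ u ∈ G.nodes, ∀ w ∈ G.nodes, u ≠ w → G.lab u = x → G.lab w = x → H.edge u w ∨ H.edge w u

theorem LabelChain.mem_of_lab_eq {G H : Episode α} {x : α} (hx : LabelChain G H x) {u w : ℕ}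
    (huH : u ∈ H.nodes) (huG : u ∈ G.nodes) (hux : G.lab u = x) (hw : w ∈ G.nodes)
    (hwx : G.lab w = x) : w ∈ H.nodes := by
  by_cases hwu : w = u
  · exact hwu ▸ huH
  rcases hx w hw u huG hwu hwx hux with h | h
  · exact (H.edge_mem h).1
  · exact (H.edge_mem h).2

theorem labelChain_eraseEdge {G : Episode α} (hs : G.Strict) (ht : G.TransClosed)
    {f : ℕ × ℕ} (hf : G.lab f.1 ≠ G.lab f.2) (x : α) : LabelChain G (G.eraseEdge f) x := by
  intro u hu w hw huw hux hwx
  have hne : ∀ a b, G.lab a = x → G.lab b = x → (a, b) ≠ f := by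
    rintro a b ha hb rfl
    exact hf (ha.trans hb.symm)
  exact (edge_or_edge_of_lab_eq hs ht hu hw huw (hux.trans hwx.symm)).imp
    (fun h => ⟨h, hne u w hux hwx⟩) (fun h => ⟨h, hne w u hwx hux⟩)

theorem labelChain_eraseNode {G : Episode α} (hs : G.Strict) (ht : G.TransClosed)
    {v : ℕ} (hv : G.Solitary v) (x : α) : LabelChain G (G.eraseNode v) x := by
  intro u hu w hw huw hux hwx
  exact (edge_or_edge_of_lab_eq hs ht hu hw huw (hux.trans hwx.symm)).imp
    (fun h => ⟨h, hv.ne_of_edge h⟩) (fun h => ⟨h, hv.ne_of_edge h⟩)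

def IsCovering (s : List α) (G : Episode α) (f : {v // v ∈ G.nodes} → Fin s.length) : Prop :=
  Function.Injective f ∧ (∀ v, s.get (f v) = G.lab v.1) ∧ ∀ u v, G.edge u.1 v.1 → f u < f v

theorem IsCovering.restrict {s : List α} {K : Episode α} {c} (hc : IsCovering s K c)
    {U : Finset ℕ} (hU : U ⊆ K.nodes) :
    IsCovering s (K.restrict U) (fun v => c ⟨v.1, hU v.2⟩) :=
  ⟨fun _ _ h => Subtype.ext (congrArg Subtype.val (hc.1 h) :), fun _ => hc.2.1 _,
    fun _ _ h => hc.2.2 _ _ h.2.2⟩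

theorem IsOcc.comp {s : List α} {ρ : ℕ} {A B : Episode α} {g}
    (hg : IsOcc s ρ A g) {φ : {v // v ∈ B.nodes} → {v // v ∈ A.nodes}}
    (hφ : Function.Injective φ) (hlab : ∀ v, A.lab (φ v) = B.lab v)
    (hedge : ∀ u v, B.edge u.1 v.1 → A.edge (φ u) (φ v)) : IsOcc s ρ B (g ∘ φ) :=
  ⟨hg.1.comp hφ, fun v => (hg.2.1 _).trans (hlab v), fun u v h => hg.2.2.1 _ _ (hedge u v h),
    fun _ _ => hg.2.2.2 _ _⟩

theorem IsOcc.isCovering_clE {s : List α} {ρ : ℕ} {K : Episode α} {g} (hg : IsOcc s ρ K g) :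
    IsCovering s (clE s ρ K) g :=
  ⟨hg.1, hg.2.1, fun _ _ ⟨_, _, h⟩ => h g hg⟩

theorem SymInWindow.of_comp {s : List α} {A B : Episode α} {g : {v // v ∈ A.nodes} → Fin s.length}
    {φ : {v // v ∈ B.nodes} → {v // v ∈ A.nodes}} {x : α} (h : SymInWindow s (g ∘ φ) x) :
    SymInWindow s g x :=
  let ⟨i, hi, ⟨u, hu⟩, ⟨w, hw⟩⟩ := h
  ⟨i, hi, ⟨φ u, hu⟩, ⟨φ w, hw⟩⟩

def subseqAt (s : List α) (P : Finset (Fin s.length)) : List α :=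
  List.ofFn fun i => s.get (P.orderIsoOfFin rfl i)

theorem covers_subseqAt_iff {s : List α} {P : Finset (Fin s.length)} {K : Episode α} :
    Covers (subseqAt s P) K ↔ ∃ c, IsCovering s K c ∧ ∀ v, c v ∈ P := by
  have hlen : (subseqAt s P).length = P.card := List.length_ofFn
  set e := P.orderIsoOfFin rfl
  have hget : ∀ i, (subseqAt s P).get i = s.get (e (Fin.cast hlen i)) := List.get_ofFn _
  constructor
  · rintro ⟨f, hinj, hlab, hmono⟩
    refine ⟨fun v => e (Fin.cast hlen (f v)), ⟨fun u w h => hinj ?_, fun v => ?_, fun u w h => ?_⟩,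
      fun v => (e _).2⟩
    · simpa using h
    · rw [← hget, hlab]
    · simpa using hmono u w h
  · rintro ⟨c, ⟨hinj, hlab, hmono⟩, hP⟩
    refine ⟨fun v => Fin.cast hlen.symm (e.symm ⟨c v, hP v⟩), fun u w h => hinj ?_, fun v => ?_,
      fun u w h => ?_⟩
    · simpa using h
    · rw [hget, ← hlab v]
      simp
    · simpa using hmono u w h

end

section

variable {α : Type*} [LinearOrder α] {s : List α} {ρ : ℕ}

/-- The labels that `clN` adds to `A`, each on one new node. -/
noncomputable def newLabels (s : List α) (ρ : ℕ) (A : Episode α) : Finset α :=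
  s.toFinset.filter fun x =>
    (∀ f, IsOcc s ρ A f → SymInWindow s f x) ∧ ∀ v ∈ A.nodes, A.lab v ≠ x

theorem mem_clN_nodes {A : Episode α} {u : ℕ} (hu : u ∈ A.nodes) : u ∈ (clN s ρ A).nodes :=
  Finset.mem_union_left _ hu

theorem clN_lab_of_mem {A : Episode α} {u : ℕ} (hu : u ∈ A.nodes) :
    (clN s ρ A).lab u = A.lab u :=
  dif_neg fun h => h.2.2 hu

theorem bijOn_clN_lab (s : List α) (ρ : ℕ) (A : Episode α) :
    Set.BijOn (clN s ρ A).lab ↑((clN s ρ A).nodes \ A.nodes) ↑(newLabels s ρ A) := by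
  set L := (newLabels s ρ A).sort (· ≤ ·)
  set b := A.nodes.sup id + 1
  have hb : ∀ i, b + i ∉ A.nodes := fun i h => by
    have := Finset.le_sup (f := id) h
    simp only [id] at this
    omega
  have hnodes : (clN s ρ A).nodes \ A.nodes = (Finset.range L.length).image (b + ·) := by
    refine (Finset.union_sdiff_left _ _).trans (Finset.sdiff_eq_self_of_disjoint ?_)
    refine Finset.disjoint_left.2 fun _ h => ?_
    obtain ⟨i, -, rfl⟩ := Finset.mem_image.1 h
    exact hb i
  have hlab : ∀ i (hi : i < L.length), (clN s ρ A).lab (b + i) = L.get ⟨i, hi⟩ := by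
    intro i hi
    have hsub : b + i - (A.nodes.sup id + 1) = i := Nat.add_sub_cancel_left ..
    show dite _ _ _ = _
    rw [dif_pos ⟨Nat.le_add_right _ _, by rw [hsub]; exact hi, hb i⟩]
    simp only [hsub]
    rfl
  simp only [hnodes, Finset.coe_image, Finset.coe_range]
  refine ⟨?_, ?_, fun x hx => ?_⟩
  · rintro _ ⟨i, hi, rfl⟩
    rw [Set.mem_Iio] at hi
    rw [hlab i hi, Finset.mem_coe, ← Finset.mem_sort (· ≤ ·)]
    exact List.get_mem _ _
  · rintro _ ⟨i, hi, rfl⟩ _ ⟨j, hj, rfl⟩ h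
    rw [Set.mem_Iio] at hi hj
    rw [hlab i hi, hlab j hj, (Finset.sort_nodup _ _).get_inj_iff] at h
    simpa using h
  · obtain ⟨⟨i, hi⟩, rfl⟩ := List.mem_iff_get.1 ((Finset.mem_sort (· ≤ ·)).2 hx)
    exact ⟨b + i, ⟨i, hi, rfl⟩, hlab i hi⟩

theorem mem_of_clN_lab_eq {A : Episode α} {u w : ℕ} (hw : w ∈ (clN s ρ A).nodes)
    (hu : u ∈ A.nodes) (h : (clN s ρ A).lab w = A.lab u) : w ∈ A.nodes := by
  by_contra hwA
  have := (bijOn_clN_lab s ρ A).mapsTo (Finset.mem_coe.2 (Finset.mem_sdiff.2 ⟨hw, hwA⟩))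
  exact (Finset.mem_filter.1 this).2.2 u hu h.symm

theorem mem_newLabels_of_isSubgraph {A B : Episode α} (hBA : B.IsSubgraph A) {x : α}
    (hx : x ∈ newLabels s ρ B) (hA : ∀ a ∈ A.nodes, A.lab a ≠ x) : x ∈ newLabels s ρ A := by
  obtain ⟨hxs, hwin, -⟩ := Finset.mem_filter.1 hx
  refine Finset.mem_filter.2 ⟨hxs, fun g hg => ?_, hA⟩
  have hrestr : IsOcc s ρ B (g ∘ fun v => ⟨v.1, hBA.1 v.2⟩) :=
    hg.comp (fun _ _ h => Subtype.ext (congrArg Subtype.val h :))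
      (fun _ => (congrFun hBA.2.1 _).symm) (fun _ _ h => hBA.2.2 h)
  exact (hwin _ hrestr).of_comp

theorem exists_clN_node_lab_eq {A B : Episode α} (hBA : B.IsSubgraph A) {v : ℕ}
    (hv : v ∈ (clN s ρ B).nodes) (hvB : v ∉ B.nodes) :
    ∃ w ∈ (clN s ρ A).nodes, w ∉ B.nodes ∧ (clN s ρ A).lab w = (clN s ρ B).lab v := by
  have hx := (bijOn_clN_lab s ρ B).mapsTo (Finset.mem_coe.2 (Finset.mem_sdiff.2 ⟨hv, hvB⟩))
  obtain ⟨-, -, hxB⟩ := Finset.mem_filter.1 hx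
  by_cases hA : ∃ a ∈ A.nodes, A.lab a = (clN s ρ B).lab v
  · obtain ⟨a, ha, hax⟩ := hA
    refine ⟨a, mem_clN_nodes ha, fun haB => hxB a haB ?_, (clN_lab_of_mem ha).trans hax⟩
    rw [hBA.2.1]
    exact hax
  · simp only [not_exists, not_and] at hA
    obtain ⟨w, hw, hwx⟩ := (bijOn_clN_lab s ρ A).surjOn (mem_newLabels_of_isSubgraph hBA hx hA)
    obtain ⟨hw, hwA⟩ := Finset.mem_sdiff.1 hw
    exact ⟨w, hw, fun hwB => hwA (hBA.1 hwB), hwx⟩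

theorem exists_clN_map {A B : Episode α} (hBA : B.IsSubgraph A) :
    ∃ φ : {v // v ∈ (clN s ρ B).nodes} → {v // v ∈ (clN s ρ A).nodes},
      Function.Injective φ ∧ (∀ v, (clN s ρ A).lab (φ v) = (clN s ρ B).lab v) ∧
        ∀ v, v.1 ∈ B.nodes → (φ v).1 = v.1 := by
  have hpt : ∀ v : {v // v ∈ (clN s ρ B).nodes}, ∃ w : {w // w ∈ (clN s ρ A).nodes},
      (clN s ρ A).lab w = (clN s ρ B).lab v ∧ (v.1 ∈ B.nodes → w.1 = v.1) ∧
        (w.1 ∈ B.nodes → v.1 ∈ B.nodes) := by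
    rintro ⟨v, hv⟩
    by_cases hvB : v ∈ B.nodes
    · refine ⟨⟨v, mem_clN_nodes (hBA.1 hvB)⟩, ?_, fun _ => rfl, fun _ => hvB⟩
      rw [clN_lab_of_mem (hBA.1 hvB), clN_lab_of_mem hvB, hBA.2.1]
    · obtain ⟨w, hw, hwB, hwl⟩ := exists_clN_node_lab_eq hBA hv hvB
      exact ⟨⟨w, hw⟩, hwl, fun h => absurd h hvB, fun h => absurd h hwB⟩
  choose φ hlab hid hB using hpt
  refine ⟨φ, fun u w huw => ?_, hlab, hid⟩
  by_cases hu : u.1 ∈ B.nodes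
  · have hw : w.1 ∈ B.nodes := hB w (by rw [← huw, hid u hu]; exact hu)
    exact Subtype.ext (by rw [← hid u hu, ← hid w hw, huw])
  by_cases hw : w.1 ∈ B.nodes
  · exact absurd (hB u (by rw [huw, hid w hw]; exact hw)) hu
  refine Subtype.ext ((bijOn_clN_lab s ρ B).injOn ?_ ?_ ?_)
  · exact Finset.mem_coe.2 (Finset.mem_sdiff.2 ⟨u.2, hu⟩)
  · exact Finset.mem_coe.2 (Finset.mem_sdiff.2 ⟨w.2, hw⟩)
  · rw [← hlab u, ← hlab w, huw]

theorem subep_icl_eraseEdge_of_forall_isOcc {G : Episode α} {e : ℕ × ℕ} (he : G.edge e.1 e.2)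
    (hocc : ∀ g, IsOcc s ρ (clN s ρ (G.eraseEdge e)) g → ∀ h₁ h₂, g ⟨e.1, h₁⟩ < g ⟨e.2, h₂⟩) :
    Subep G (icl s ρ (G.eraseEdge e)) := by
  refine ⟨G.nodes, fun _ hu => mem_clN_nodes hu, rfl,
    fun _ ⟨c, hinj, hlab, hmono⟩ => ⟨c, hinj, fun v => (hlab v).trans (clN_lab_of_mem v.2),
      fun u w huw => hmono u w ⟨u.2, w.2, mem_clN_nodes u.2, mem_clN_nodes w.2, fun g hg => ?_⟩⟩⟩
  by_cases h : (u.1, w.1) = e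
  · subst h
    exact hocc g hg _ _
  · exact hg.2.2.1 ⟨u.1, _⟩ ⟨w.1, _⟩ ⟨huw, h⟩

theorem eq_of_labelChain {G H : Episode α} {e : ℕ × ℕ} (hHG : H.IsSubgraph G)
    (hne : G.lab e.1 ≠ G.lab e.2) {x : α} (hx : LabelChain G H x)
    {g : {v // v ∈ (clN s ρ (G.eraseEdge e)).nodes} → Fin s.length}
    (hg : IsOcc s ρ (clN s ρ (G.eraseEdge e)) g) {k : {v // v ∈ H.nodes} → Fin s.length}
    (hk : IsCovering s H k) (hkg : ∀ v, k v ∈ Finset.univ.image g)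
    {v : {v // v ∈ H.nodes}} (hv : H.lab v = x) :
    g ⟨v, mem_clN_nodes (hHG.1 v.2)⟩ = k v := by
  have hlab : ∀ u, H.lab u = G.lab u := congrFun hHG.2.1
  refine Finset.eqOn_of_strictMono_rel_of_image_subset (r := fun u w => H.edge u.1 w.1)
    (T := Finset.univ.filter fun v : {v // v ∈ H.nodes} => H.lab v = x)
    (φ := fun v => g ⟨v, mem_clN_nodes (hHG.1 v.2)⟩) ?_ ?_ (fun u _ w _ h => hk.2.2 u w h) ?_
    (by simpa using hv)
  · intro u hu w hw huw
    simp only [Finset.mem_filter, Finset.mem_univ, true_and, hlab] at hu hw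
    exact hx u (hHG.1 u.2) w (hHG.1 w.2) (Subtype.val_injective.ne huw) hu hw
  · intro u hu w hw huw
    simp only [Finset.mem_filter, Finset.mem_univ, true_and, hlab] at hu hw
    refine hg.2.2.1 _ _ ⟨hHG.2.2 huw, fun heq => hne ?_⟩
    rw [← heq]
    exact hu.trans hw.symm
  · intro p hp
    obtain ⟨u, hu, rfl⟩ := Finset.mem_image.1 hp
    simp only [Finset.mem_filter, Finset.mem_univ, true_and] at hu
    obtain ⟨w, -, hw⟩ := Finset.mem_image.1 (hkg u)
    have hwlab : (clN s ρ (G.eraseEdge e)).lab w = G.lab u := by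
      rw [← hg.2.1 w, hw, hk.2.1 u, hlab]
    have hwG : w.1 ∈ G.nodes := mem_of_clN_lab_eq (A := G.eraseEdge e) w.2 (hHG.1 u.2) hwlab
    have hux : G.lab u = x := (hlab u).symm.trans hu
    have hwx : G.lab w = x := (clN_lab_of_mem (A := G.eraseEdge e) hwG).symm.trans (hwlab.trans hux)
    refine Finset.mem_image.2 ⟨⟨w, hx.mem_of_lab_eq u.2 (hHG.1 u.2) hux hwG hwx⟩, ?_, hw⟩
    simpa [hlab] using hwx

theorem subep_icl_eraseEdge_of_isSubgraph {G H : Episode α} {e : ℕ × ℕ} (hHG : H.IsSubgraph G)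
    (heH : H.edge e.1 e.2) (hne : G.lab e.1 ≠ G.lab e.2) (h₁ : LabelChain G H (G.lab e.1))
    (h₂ : LabelChain G H (G.lab e.2)) (hH : Subep H (icl s ρ (H.eraseEdge e))) :
    Subep G (icl s ρ (G.eraseEdge e)) := by
  refine subep_icl_eraseEdge_of_forall_isOcc (hHG.2.2 heH) fun g hg _ _ => ?_
  obtain ⟨U, hU, -, hcov⟩ := hH
  obtain ⟨φ, hφinj, hφlab, hφid⟩ := exists_clN_map (s := s) (ρ := ρ) (hHG.eraseEdge e)
  have hocc : IsOcc s ρ (clN s ρ (H.eraseEdge e)) (g ∘ φ) := by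
    refine hg.comp hφinj hφlab fun u w huw => ?_
    have hmem := (H.eraseEdge e).edge_mem huw
    rw [hφid u hmem.1, hφid w hmem.2]
    exact (hHG.eraseEdge e).2.2 huw
  -- `H` is covered by the subsequence of `s` that `g` occupies, hence it lands on `g`'s positions
  obtain ⟨k, hk, hkg⟩ := covers_subseqAt_iff.1 <| hcov _ <| covers_subseqAt_iff.2
    ⟨_, hocc.isCovering_clE.restrict hU, fun _ => Finset.mem_image_of_mem g (Finset.mem_univ _)⟩
  have he₁ := eq_of_labelChain hHG hne h₁ hg hk hkg (v := ⟨e.1, (H.edge_mem heH).1⟩)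
    (congrFun hHG.2.1 _)
  have he₂ := eq_of_labelChain hHG hne h₂ hg hk hkg (v := ⟨e.2, (H.edge_mem heH).2⟩)
    (congrFun hHG.2.1 _)
  exact he₁.trans_lt ((hk.2.2 _ _ heH).trans_eq he₂.symm)

end

end Episode

open Episode in
/-- Non-derivable proper skeleton edges survive removal of other proper
skeleton edges and of solitary nodes: if `e` is a non-derivable proper
skeleton edge of `G ∈ 𝒮`, then `e` is a non-derivable proper skeleton edge of
`G − f` for every proper skeleton edge `f ≠ e`, and of `G − v` for every
solitary node `v`. -/
theorem stmt16 {α : Type*} [LinearOrder α] (s : List α) (ρ : ℕ)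
    (G : Episode α) (hG : inS G) (e : ℕ × ℕ)
    (he : IsProperSkeletonEdge G e)
    (hnd : ¬ Subep G (icl s ρ (G.eraseEdge e))) :
    (∀ f, IsProperSkeletonEdge G f → f ≠ e →
      IsProperSkeletonEdge (G.eraseEdge f) e ∧
      ¬ Subep (G.eraseEdge f) (icl s ρ ((G.eraseEdge f).eraseEdge e))) ∧
    ∀ v, Solitary G v →
      IsProperSkeletonEdge (G.eraseNode v) e ∧
      ¬ Subep (G.eraseNode v) (icl s ρ ((G.eraseNode v).eraseEdge e)) := by
  obtain ⟨-, htc, hstrict⟩ := hG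
  refine ⟨fun f hf hfe => ?_, fun v hv => ?_⟩
  · have he' := he.eraseEdge hfe.symm
    refine ⟨he', fun h => hnd ?_⟩
    exact subep_icl_eraseEdge_of_isSubgraph (eraseEdge_isSubgraph G f) he'.1.1 he.2
      (labelChain_eraseEdge hstrict htc hf.2 _) (labelChain_eraseEdge hstrict htc hf.2 _) h
  · have he' := he.eraseNode (hv.ne_of_edge he.1.1).1 (hv.ne_of_edge he.1.1).2
    refine ⟨he', fun h => hnd ?_⟩
    exact subep_icl_eraseEdge_of_isSubgraph (eraseNode_isSubgraph G v) he'.1.1 he.2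
      (labelChain_eraseNode hstrict htc hv _) (labelChain_eraseNode hstrict htc hv _) h
end
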